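/- arXiv:1206.3404 — 3 statements merged into one kernel-verified Lean document; each statement's English description precedes it below -/
import Mathlib

section
/- Let S(D) = (δ + |D|)^(p-2) D for 2×2 symmetric matrices D, with δ > 0 and p ∈ (1,2]. Then for all 2×2 symmetric matrices A, B there exist constants c₀, c₁ > 0 depending only on p (not on δ) such that c₀ (δ + |A| + |B|)^(p-2) |A - B|² ≤ (S(A) - S(B)) : (A - B) ≤ c₁ (δ + |A| + |B|)^(p-2) |A - B|², where : denotes the Frobenius inner product and |·| the Frobenius norm. -/
/-!
On any real inner product space put `S x = φ(‖x‖) • x` with `φ t = (δ + t)^(p-2)`; the matrix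
statement is the case of the Euclidean space on the four entries. With `a = ‖x‖`, `b = ‖y‖` and
`m = ⟪x, y⟫`, both `⟪S x - S y, x - y⟫` and `‖x - y‖²` are affine in `m`, which by Cauchy–Schwarz
ranges over `[-ab, ab]`, so it suffices to compare them at `m = ±ab`. In terms of the scalar stress
`s t = φ t * t` these endpoints are `(s a - s b)(a - b)` and `(s a + s b)(a + b)`. For `b ≤ a`,
concavity of `t ↦ t^(p-1)` and antitonicity of `φ` give `(p-1) φ a ≤ (s a - s b)/(a - b) ≤ φ a`,
while `φ(a+b) ≤ φ a ≤ 2 φ(a+b)`; the antiparallel endpoint follows from monotonicity of `s`.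
Hence `c₀ = p - 1` and `c₁ = 2`.
-/

/-- Frobenius norm of a 2×2 real matrix. -/
noncomputable def frob (A : Fin 2 → Fin 2 → ℝ) : ℝ :=
  Real.sqrt (∑ i, ∑ j, (A i j) ^ 2)

/-- Frobenius inner product `A : B`. -/
def mdot (A B : Fin 2 → Fin 2 → ℝ) : ℝ := ∑ i, ∑ j, A i j * B i j

/-- The extra stress tensor `S(D) = (δ + |D|)^(p-2) D`. -/
noncomputable def stressS (δ p : ℝ) (D : Fin 2 → Fin 2 → ℝ) : Fin 2 → Fin 2 → ℝ :=
  fun i j => (δ + frob D) ^ (p - 2) * D i j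

open Real
open scoped InnerProductSpace

theorem rpow_le_rpow_add_mul_rpow_sub_one_mul_sub {r x y : ℝ} (hr0 : 0 ≤ r) (hr1 : r ≤ 1)
    (hx : 0 < x) (hy : 0 ≤ y) : y ^ r ≤ x ^ r + r * x ^ (r - 1) * (y - x) := by
  have bernoulli := rpow_one_add_le_one_add_mul_self (s := y / x - 1)
    (by linarith [div_nonneg hy hx.le]) hr0 hr1
  rw [add_sub_cancel] at bernoulli
  calc y ^ r = (y / x) ^ r * x ^ r := by
        rw [div_rpow hy hx.le, div_mul_cancel₀ _ (rpow_pos_of_pos hx r).ne']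
    _ ≤ (1 + r * (y / x - 1)) * x ^ r := by gcongr
    _ = x ^ r + r * x ^ (r - 1) * (y - x) := by
        rw [rpow_sub_one hx.ne']; field_simp

theorem rpow_le_two_mul_rpow_of_le_two_mul {q u v : ℝ} (hq1 : -1 ≤ q) (hq0 : q ≤ 0)
    (hu : 0 ≤ u) (hv : 0 < v) (hvu : v ≤ 2 * u) : u ^ q ≤ 2 * v ^ q := by
  have half_le : (2 : ℝ) ^ (-1 : ℝ) ≤ 2 ^ q := rpow_le_rpow_of_exponent_le (by norm_num) hq1
  calc u ^ q = 2 * (2 ^ (-1 : ℝ) * u ^ q) := by rw [rpow_neg_one]; ring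
    _ ≤ 2 * (2 ^ q * u ^ q) := by gcongr
    _ = 2 * (2 * u) ^ q := by rw [mul_rpow (by norm_num) hu]
    _ ≤ 2 * v ^ q := mul_le_mul_of_nonneg_left (rpow_le_rpow_of_nonpos hv hvu hq0) two_pos.le

theorem nonneg_of_affine_nonneg_endpoints {u v l r m : ℝ} (hl : 0 ≤ u + v * l)
    (hr : 0 ≤ u + v * r) (hm : m ∈ Set.Icc l r) : 0 ≤ u + v * m := by
  rcases le_total 0 v with hv | hv <;> nlinarith [hm.1, hm.2]

noncomputable def scalarStress (δ p t : ℝ) : ℝ := (δ + t) ^ (p - 2) * t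

section ScalarStress

variable {δ p a b : ℝ}

theorem scalarStress_eq_rpow_sub {t : ℝ} (ht : 0 < δ + t) :
    scalarStress δ p t = (δ + t) ^ (p - 1) - δ * (δ + t) ^ (p - 2) := by
  rw [scalarStress, show p - 1 = p - 2 + 1 by ring, rpow_add_one ht.ne']
  ring

theorem sub_one_mul_rpow_mul_sub_le_scalarStress_sub (hδ : 0 < δ) (hp1 : 1 ≤ p) (hp2 : p ≤ 2)
    (hb : 0 ≤ b) (hba : b ≤ a) :
    (p - 1) * (δ + a) ^ (p - 2) * (a - b) ≤ scalarStress δ p a - scalarStress δ p b := by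
  have hb' : 0 < δ + b := by linarith
  have ha' : 0 < δ + a := by linarith
  have tangent := rpow_le_rpow_add_mul_rpow_sub_one_mul_sub (r := p - 1) (by linarith)
    (by linarith) ha' hb'.le
  rw [show p - 1 - 1 = p - 2 by ring] at tangent
  have anti : (δ + a) ^ (p - 2) ≤ (δ + b) ^ (p - 2) :=
    rpow_le_rpow_of_nonpos hb' (by linarith) (by linarith)
  rw [scalarStress_eq_rpow_sub ha', scalarStress_eq_rpow_sub hb']
  linarith [mul_le_mul_of_nonneg_left anti hδ.le]

theorem scalarStress_sub_le_rpow_mul_sub (hδ : 0 < δ) (hp2 : p ≤ 2) (hb : 0 ≤ b)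
    (hba : b ≤ a) : scalarStress δ p a - scalarStress δ p b ≤ (δ + a) ^ (p - 2) * (a - b) := by
  have anti : (δ + a) ^ (p - 2) ≤ (δ + b) ^ (p - 2) :=
    rpow_le_rpow_of_nonpos (by linarith) (by linarith) (by linarith)
  unfold scalarStress
  nlinarith [mul_le_mul_of_nonneg_right anti hb]

theorem scalarStress_monotoneOn (hδ : 0 < δ) (hp1 : 1 ≤ p) (hp2 : p ≤ 2) :
    MonotoneOn (scalarStress δ p) (Set.Ici 0) := by
  intro b hb a _ hba
  have gap := sub_one_mul_rpow_mul_sub_le_scalarStress_sub hδ hp1 hp2 hb hba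
  have : 0 ≤ (p - 1) * (δ + a) ^ (p - 2) * (a - b) :=
    mul_nonneg (mul_nonneg (by linarith) (rpow_nonneg (by linarith [Set.mem_Ici.mp hb]) _))
      (by linarith)
  linarith

theorem scalarStress_parallel_bounds (hδ : 0 < δ) (hp1 : 1 ≤ p) (hp2 : p ≤ 2) (ha : 0 ≤ a)
    (hb : 0 ≤ b) :
    (p - 1) * (δ + a + b) ^ (p - 2) * (a - b) ^ 2 ≤
        (scalarStress δ p a - scalarStress δ p b) * (a - b) ∧
      (scalarStress δ p a - scalarStress δ p b) * (a - b) ≤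
        2 * (δ + a + b) ^ (p - 2) * (a - b) ^ 2 := by
  wlog hba : b ≤ a generalizing a b
  · obtain ⟨lower, upper⟩ := this hb ha (le_of_not_ge hba)
    rw [add_right_comm] at lower upper
    constructor <;> linarith
  have hψ : (δ + a + b) ^ (p - 2) ≤ (δ + a) ^ (p - 2) :=
    rpow_le_rpow_of_nonpos (by linarith) (by linarith) (by linarith)
  have hφ : (δ + a) ^ (p - 2) ≤ 2 * (δ + a + b) ^ (p - 2) :=
    rpow_le_two_mul_rpow_of_le_two_mul (by linarith) (by linarith) (by linarith) (by linarith)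
      (by linarith)
  have lower := sub_one_mul_rpow_mul_sub_le_scalarStress_sub hδ hp1 hp2 hb hba
  have upper := scalarStress_sub_le_rpow_mul_sub hδ hp2 hb hba
  have hab : 0 ≤ a - b := by linarith
  constructor <;> nlinarith [mul_le_mul_of_nonneg_left hψ (by linarith : (0 : ℝ) ≤ p - 1)]

theorem scalarStress_antiparallel_bounds (hδ : 0 < δ) (hp1 : 1 ≤ p) (hp2 : p ≤ 2)
    (ha : 0 ≤ a) (hb : 0 ≤ b) :
    (p - 1) * (δ + a + b) ^ (p - 2) * (a + b) ^ 2 ≤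
        (scalarStress δ p a + scalarStress δ p b) * (a + b) ∧
      (scalarStress δ p a + scalarStress δ p b) * (a + b) ≤
        2 * (δ + a + b) ^ (p - 2) * (a + b) ^ 2 := by
  have hψa : (δ + a + b) ^ (p - 2) ≤ (δ + a) ^ (p - 2) :=
    rpow_le_rpow_of_nonpos (by linarith) (by linarith) (by linarith)
  have hψb : (δ + a + b) ^ (p - 2) ≤ (δ + b) ^ (p - 2) :=
    rpow_le_rpow_of_nonpos (by linarith) (by linarith) (by linarith)
  have hψ : 0 ≤ (δ + a + b) ^ (p - 2) := rpow_nonneg (by linarith) _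
  have mono := scalarStress_monotoneOn hδ hp1 hp2
  have hsa := mono (Set.mem_Ici.mpr ha) (Set.mem_Ici.mpr (add_nonneg ha hb)) (by linarith)
  have hsb := mono (Set.mem_Ici.mpr hb) (Set.mem_Ici.mpr (add_nonneg ha hb)) (by linarith)
  simp only [scalarStress, ← add_assoc] at hsa hsb ⊢
  have hab : 0 ≤ a + b := by linarith
  constructor
  · nlinarith [mul_le_mul_of_nonneg_right hψa ha, mul_le_mul_of_nonneg_right hψb hb,
      mul_nonneg (mul_nonneg (by linarith : (0 : ℝ) ≤ 2 - p) hψ) hab]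
  · nlinarith

theorem scalarStress_pair_bounds (hδ : 0 < δ) (hp1 : 1 ≤ p) (hp2 : p ≤ 2) (ha : 0 ≤ a)
    (hb : 0 ≤ b) {m : ℝ} (hm : |m| ≤ a * b) :
    (p - 1) * (δ + a + b) ^ (p - 2) * (a ^ 2 - 2 * m + b ^ 2) ≤
        scalarStress δ p a * a + scalarStress δ p b * b -
          ((δ + a) ^ (p - 2) + (δ + b) ^ (p - 2)) * m ∧
      scalarStress δ p a * a + scalarStress δ p b * b -
          ((δ + a) ^ (p - 2) + (δ + b) ^ (p - 2)) * m ≤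
        2 * (δ + a + b) ^ (p - 2) * (a ^ 2 - 2 * m + b ^ 2) := by
  set φa := (δ + a) ^ (p - 2)
  set φb := (δ + b) ^ (p - 2)
  set ψ := (δ + a + b) ^ (p - 2)
  have hsa : scalarStress δ p a = φa * a := rfl
  have hsb : scalarStress δ p b = φb * b := rfl
  obtain ⟨par_lo, par_hi⟩ := scalarStress_parallel_bounds hδ hp1 hp2 ha hb
  obtain ⟨anti_lo, anti_hi⟩ := scalarStress_antiparallel_bounds hδ hp1 hp2 ha hb
  rw [hsa, hsb] at par_lo par_hi anti_lo anti_hi ⊢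
  have hm' : m ∈ Set.Icc (-(a * b)) (a * b) := abs_le.mp hm
  constructor
  · have := nonneg_of_affine_nonneg_endpoints
      (u := φa * a ^ 2 + φb * b ^ 2 - (p - 1) * ψ * (a ^ 2 + b ^ 2))
      (v := 2 * (p - 1) * ψ - (φa + φb)) (by linarith) (by linarith) hm'
    linarith
  · have := nonneg_of_affine_nonneg_endpoints
      (u := 2 * ψ * (a ^ 2 + b ^ 2) - φa * a ^ 2 - φb * b ^ 2)
      (v := φa + φb - 4 * ψ) (by linarith) (by linarith) hm'
    linarith

end ScalarStress

section InnerProductSpace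

variable {E : Type*} [NormedAddCommGroup E] [InnerProductSpace ℝ E]

noncomputable def stress (δ p : ℝ) (x : E) : E := (δ + ‖x‖) ^ (p - 2) • x

theorem inner_stress_sub_stress (δ p : ℝ) (x y : E) :
    ⟪stress δ p x - stress δ p y, x - y⟫_ℝ =
      scalarStress δ p ‖x‖ * ‖x‖ + scalarStress δ p ‖y‖ * ‖y‖ -
        ((δ + ‖x‖) ^ (p - 2) + (δ + ‖y‖) ^ (p - 2)) * ⟪x, y⟫_ℝ := by
  simp only [stress, scalarStress, inner_sub_left, inner_sub_right, real_inner_smul_left,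
    real_inner_self_eq_norm_sq, real_inner_comm x y]
  ring

theorem inner_stress_sub_stress_bounds {δ p : ℝ} (hδ : 0 < δ) (hp1 : 1 ≤ p) (hp2 : p ≤ 2)
    (x y : E) :
    (p - 1) * (δ + ‖x‖ + ‖y‖) ^ (p - 2) * ‖x - y‖ ^ 2 ≤
        ⟪stress δ p x - stress δ p y, x - y⟫_ℝ ∧
      ⟪stress δ p x - stress δ p y, x - y⟫_ℝ ≤
        2 * (δ + ‖x‖ + ‖y‖) ^ (p - 2) * ‖x - y‖ ^ 2 := by
  rw [inner_stress_sub_stress, norm_sub_sq_real]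
  exact scalarStress_pair_bounds hδ hp1 hp2 (norm_nonneg x) (norm_nonneg y)
    (abs_real_inner_le_norm x y)

end InnerProductSpace

def toEuclideanProd {m n : Type*} (A : m → n → ℝ) : EuclideanSpace ℝ (m × n) :=
  WithLp.toLp 2 (Function.uncurry A)

theorem toEuclideanProd_sub {m n : Type*} (A B : m → n → ℝ) :
    toEuclideanProd (A - B) = toEuclideanProd A - toEuclideanProd B := rfl

theorem frob_eq_norm_toEuclideanProd (A : Fin 2 → Fin 2 → ℝ) :
    frob A = ‖toEuclideanProd A‖ := by
  simp [frob, EuclideanSpace.norm_eq, toEuclideanProd, Fintype.sum_prod_type]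

theorem mdot_eq_inner_toEuclideanProd (A B : Fin 2 → Fin 2 → ℝ) :
    mdot A B = ⟪toEuclideanProd A, toEuclideanProd B⟫_ℝ := by
  simp [mdot, PiLp.inner_apply, toEuclideanProd, Fintype.sum_prod_type, mul_comm]

theorem toEuclideanProd_stressS (δ p : ℝ) (A : Fin 2 → Fin 2 → ℝ) :
    toEuclideanProd (stressS δ p A) = stress δ p (toEuclideanProd A) := by
  ext ⟨i, j⟩
  simp [stressS, stress, toEuclideanProd, frob_eq_norm_toEuclideanProd]

/-- For `p ∈ (1,2]` there are `c₀, c₁ > 0` depending only on `p` such that for all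
`δ > 0` and all symmetric 2×2 matrices `A, B`,
`c₀ (δ+|A|+|B|)^(p-2)|A-B|² ≤ (S(A)-S(B)) : (A-B) ≤ c₁ (δ+|A|+|B|)^(p-2)|A-B|²`. -/
theorem stress_monotonicity_equivalence (p : ℝ) (hp1 : 1 < p) (hp2 : p ≤ 2) :
    ∃ c₀ c₁ : ℝ, 0 < c₀ ∧ 0 < c₁ ∧ ∀ δ : ℝ, 0 < δ →
      ∀ A B : Fin 2 → Fin 2 → ℝ, (∀ i j, A i j = A j i) → (∀ i j, B i j = B j i) →
        c₀ * (δ + frob A + frob B) ^ (p - 2) * (frob (A - B)) ^ 2 ≤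
            mdot (stressS δ p A - stressS δ p B) (A - B) ∧
          mdot (stressS δ p A - stressS δ p B) (A - B) ≤
            c₁ * (δ + frob A + frob B) ^ (p - 2) * (frob (A - B)) ^ 2 := by
  refine ⟨p - 1, 2, by linarith, two_pos, fun δ hδ A B _ _ => ?_⟩
  simpa only [mdot_eq_inner_toEuclideanProd, toEuclideanProd_sub, toEuclideanProd_stressS,
    frob_eq_norm_toEuclideanProd] using
    inner_stress_sub_stress_bounds hδ hp1.le hp2 (toEuclideanProd A) (toEuclideanProd B)
end

section
/- Let S(D) = (δ + |D|)^(p-2) D for 2×2 symmetric matrices, δ > 0, p ∈ (1,2]. Then there exist constants c₀, c₁ > 0 depending only on p such that for all symmetric A, B: c₀ (δ + |A| + |B|)^(p-2) |A - B| ≤ |S(A) - S(B)| ≤ c₁ (δ + |A| + |B|)^(p-2) |A - B|. -/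
open Real

lemma mul_rpow_mul_sub_le_rpow_sub_rpow {q u v : ℝ} (hq0 : 0 ≤ q) (hq1 : q ≤ 1) (hu : 0 < u)
    (hv : 0 ≤ v) : q * u ^ (q - 1) * (u - v) ≤ u ^ q - v ^ q := by
  have hvu : 0 ≤ v / u := div_nonneg hv hu.le
  have bernoulli : (v / u) ^ q ≤ 1 + q * (v / u - 1) := by
    simpa using rpow_one_add_le_one_add_mul_self (s := v / u - 1) (by linarith) hq0 hq1
  have huq : u ^ q = u ^ (q - 1) * u := by
    rw [← rpow_add_one hu.ne', sub_add_cancel]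
  have : v ^ q ≤ u ^ q - q * u ^ (q - 1) * (u - v) :=
    calc v ^ q = (v / u) ^ q * u ^ q := by
          rw [← mul_rpow hvu hu.le, div_mul_cancel₀ _ hu.ne']
      _ ≤ (1 + q * (v / u - 1)) * u ^ q := by gcongr
      _ = u ^ q - q * u ^ (q - 1) * (u - v) := by
          rw [huq]; field_simp; ring
  linarith

lemma rpow_le_two_mul_rpow {q x y : ℝ} (hq1 : -1 ≤ q) (hq0 : q ≤ 0) (hy : 0 < y)
    (hyx : y ≤ 2 * x) : x ^ q ≤ 2 * y ^ q := by
  have h2q : 1 / 2 ≤ (2 : ℝ) ^ q := by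
    simpa [rpow_neg_one] using rpow_le_rpow_of_exponent_le (x := 2) one_le_two hq1
  calc x ^ q ≤ (y / 2) ^ q := rpow_le_rpow_of_nonpos (by positivity) (by linarith) hq0
    _ = y ^ q / 2 ^ q := div_rpow hy.le zero_le_two q
    _ ≤ y ^ q / (1 / 2) := by gcongr
    _ = 2 * y ^ q := by ring

lemma mul_rpow_mul_sub_le_rpow_mul_sub_rpow_mul {p δ a b : ℝ} (hp1 : 1 ≤ p) (hp2 : p ≤ 2)
    (hδ : 0 < δ) (hb : 0 ≤ b) (hba : b ≤ a) :
    (p - 1) * (δ + a + b) ^ (p - 2) * (a - b) ≤ (δ + a) ^ (p - 2) * a - (δ + b) ^ (p - 2) * b := by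
  have ha : 0 < δ + a := by linarith
  have hb' : 0 < δ + b := by linarith
  have tangent := mul_rpow_mul_sub_le_rpow_sub_rpow (sub_nonneg.2 hp1) (by linarith : p - 1 ≤ 1)
    ha hb'.le
  have hδab : δ * (δ + a) ^ (p - 2) ≤ δ * (δ + b) ^ (p - 2) :=
    mul_le_mul_of_nonneg_left (rpow_le_rpow_of_nonpos hb' (by linarith) (by linarith)) hδ.le
  have hpow (t : ℝ) (ht : 0 < t) : t ^ (p - 1) = t ^ (p - 2) * t := by
    rw [← rpow_add_one ht.ne']; ring_nf
  rw [show p - 1 - 1 = p - 2 by ring, hpow _ ha, hpow _ hb'] at tangent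
  calc (p - 1) * (δ + a + b) ^ (p - 2) * (a - b) ≤ (p - 1) * (δ + a) ^ (p - 2) * (a - b) := by
        gcongr (p - 1) * ?_ * _
        exact rpow_le_rpow_of_nonpos ha (by linarith) (by linarith)
    _ ≤ _ := by linarith

section InnerProductSpace

variable {E : Type*} [NormedAddCommGroup E] [InnerProductSpace ℝ E] {p δ : ℝ}

noncomputable def powerStress (δ p : ℝ) (x : E) : E := (δ + ‖x‖) ^ (p - 2) • x

lemma mul_norm_sub_sq_le_inner_powerStress_sub (hp1 : 1 ≤ p) (hp2 : p ≤ 2) (hδ : 0 < δ)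
    (x y : E) :
    (p - 1) * (δ + ‖x‖ + ‖y‖) ^ (p - 2) * ‖x - y‖ ^ 2 ≤
      inner ℝ (powerStress δ p x - powerStress δ p y) (x - y) := by
  wlog hyx : ‖y‖ ≤ ‖x‖ generalizing x y
  · have := this y x (le_of_not_ge hyx)
    rwa [add_right_comm, norm_sub_rev, ← neg_sub x, ← neg_sub (powerStress δ p x),
      inner_neg_neg] at this
  set a := ‖x‖
  set b := ‖y‖
  have hb : 0 ≤ b := norm_nonneg y
  set α := (δ + a) ^ (p - 2)
  set β := (δ + b) ^ (p - 2)
  set γ := (δ + a + b) ^ (p - 2)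
  have hγα : γ ≤ α := rpow_le_rpow_of_nonpos (by linarith) (by linarith) (by linarith)
  have hγβ : γ ≤ β := rpow_le_rpow_of_nonpos (by linarith) (by linarith) (by linarith)
  have hγp : (p - 1) * γ ≤ γ := mul_le_of_le_one_left (rpow_nonneg (by linarith) _) (by linarith)
  have hinner : inner ℝ (powerStress δ p x - powerStress δ p y) (x - y) =
      α * a ^ 2 + β * b ^ 2 - (α + β) * inner ℝ x y := by
    simp only [powerStress, inner_sub_left, inner_sub_right, real_inner_smul_left,
      real_inner_self_eq_norm_sq, real_inner_comm x y]
    ring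
  have hdist : ‖x - y‖ ^ 2 = a ^ 2 - 2 * inner ℝ x y + b ^ 2 := norm_sub_sq_real x y
  have hvalue := mul_nonneg (sub_nonneg.2 hyx)
    (sub_nonneg.2 (mul_rpow_mul_sub_le_rpow_mul_sub_rpow_mul hp1 hp2 hδ hb hyx))
  have hslope := mul_nonneg (sub_nonneg.2 (real_inner_le_norm x y))
    (by linarith : 0 ≤ α + β - 2 * ((p - 1) * γ))
  rw [hinner, hdist]
  linarith

lemma mul_norm_sub_le_norm_powerStress_sub (hp1 : 1 ≤ p) (hp2 : p ≤ 2) (hδ : 0 < δ) (x y : E) :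
    (p - 1) * (δ + ‖x‖ + ‖y‖) ^ (p - 2) * ‖x - y‖ ≤ ‖powerStress δ p x - powerStress δ p y‖ := by
  rcases (norm_nonneg (x - y)).eq_or_lt with hxy | hxy
  · rw [← hxy, mul_zero]
    exact norm_nonneg _
  refine le_of_mul_le_mul_right ?_ hxy
  calc (p - 1) * (δ + ‖x‖ + ‖y‖) ^ (p - 2) * ‖x - y‖ * ‖x - y‖
      = (p - 1) * (δ + ‖x‖ + ‖y‖) ^ (p - 2) * ‖x - y‖ ^ 2 := by ring
    _ ≤ inner ℝ (powerStress δ p x - powerStress δ p y) (x - y) :=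
      mul_norm_sub_sq_le_inner_powerStress_sub hp1 hp2 hδ x y
    _ ≤ ‖powerStress δ p x - powerStress δ p y‖ * ‖x - y‖ := real_inner_le_norm _ _

lemma norm_powerStress_sub_le (hp1 : 1 ≤ p) (hp2 : p ≤ 2) (hδ : 0 < δ) (x y : E) :
    ‖powerStress δ p x - powerStress δ p y‖ ≤ 4 * (δ + ‖x‖ + ‖y‖) ^ (p - 2) * ‖x - y‖ := by
  wlog hyx : ‖y‖ ≤ ‖x‖ generalizing x y
  · have := this y x (le_of_not_ge hyx)
    rwa [add_right_comm, norm_sub_rev, norm_sub_rev y] at this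
  set a := ‖x‖
  set b := ‖y‖
  have hb : 0 ≤ b := norm_nonneg y
  set α := (δ + a) ^ (p - 2)
  set β := (δ + b) ^ (p - 2)
  have hα : 0 ≤ α := rpow_nonneg (by linarith) _
  have hβα : α ≤ β := rpow_le_rpow_of_nonpos (by linarith) (by linarith) (by linarith)
  have hψ : β * b ≤ α * a := by
    have := mul_rpow_mul_sub_le_rpow_mul_sub_rpow_mul hp1 hp2 hδ hb hyx
    have : 0 ≤ (p - 1) * (δ + a + b) ^ (p - 2) * (a - b) :=
      mul_nonneg (mul_nonneg (by linarith) (rpow_nonneg (by linarith) _)) (by linarith)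
    linarith
  have hab : a - b ≤ ‖x - y‖ := norm_sub_norm_le x y
  have hα2 : α ≤ 2 * (δ + a + b) ^ (p - 2) :=
    rpow_le_two_mul_rpow (by linarith) (by linarith) (by linarith) (by linarith)
  calc ‖powerStress δ p x - powerStress δ p y‖ = ‖α • (x - y) + (α - β) • y‖ := by
        congr 1
        simp only [powerStress]
        module
    _ ≤ α * ‖x - y‖ + (β - α) * b := by
        grw [norm_add_le, norm_smul, norm_smul, Real.norm_of_nonneg hα,
          Real.norm_of_nonpos (by linarith), neg_sub]
    _ ≤ 2 * α * ‖x - y‖ := by nlinarith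
    _ ≤ 4 * (δ + a + b) ^ (p - 2) * ‖x - y‖ := by nlinarith [norm_nonneg (x - y)]

end InnerProductSpace

noncomputable def matrixToEuclidean (A : Fin 2 → Fin 2 → ℝ) : EuclideanSpace ℝ (Fin 2 × Fin 2) :=
  WithLp.toLp 2 fun ij => A ij.1 ij.2

lemma norm_matrixToEuclidean (A : Fin 2 → Fin 2 → ℝ) : ‖matrixToEuclidean A‖ = frob A := by
  simp [frob, matrixToEuclidean, EuclideanSpace.norm_eq, Fintype.sum_prod_type]

lemma matrixToEuclidean_sub (A B : Fin 2 → Fin 2 → ℝ) :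
    matrixToEuclidean (A - B) = matrixToEuclidean A - matrixToEuclidean B := rfl

lemma matrixToEuclidean_stressS (δ p : ℝ) (A : Fin 2 → Fin 2 → ℝ) :
    matrixToEuclidean (stressS δ p A) = powerStress δ p (matrixToEuclidean A) := by
  rw [powerStress, norm_matrixToEuclidean]
  rfl

/-- For `p ∈ (1,2]` there are `c₀, c₁ > 0` depending only on `p` such that for all
`δ > 0` and symmetric 2×2 matrices `A, B`,
`c₀ (δ+|A|+|B|)^(p-2)|A-B| ≤ |S(A)-S(B)| ≤ c₁ (δ+|A|+|B|)^(p-2)|A-B|`. -/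
theorem stress_difference_equivalence (p : ℝ) (hp1 : 1 < p) (hp2 : p ≤ 2) :
    ∃ c₀ c₁ : ℝ, 0 < c₀ ∧ 0 < c₁ ∧ ∀ δ : ℝ, 0 < δ →
      ∀ A B : Fin 2 → Fin 2 → ℝ, (∀ i j, A i j = A j i) → (∀ i j, B i j = B j i) →
        c₀ * (δ + frob A + frob B) ^ (p - 2) * frob (A - B) ≤
            frob (stressS δ p A - stressS δ p B) ∧
          frob (stressS δ p A - stressS δ p B) ≤
            c₁ * (δ + frob A + frob B) ^ (p - 2) * frob (A - B) := by
  refine ⟨p - 1, 4, by linarith, by norm_num, fun δ hδ A B _ _ => ?_⟩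
  simp only [← norm_matrixToEuclidean, matrixToEuclidean_sub, matrixToEuclidean_stressS]
  exact ⟨mul_norm_sub_le_norm_powerStress_sub hp1.le hp2 hδ _ _,
    norm_powerStress_sub_le hp1.le hp2 hδ _ _⟩
end

section
/- Let S(D) = (δ + |D|)^(p-2) D on 2×2 symmetric matrices with δ > 0 and p ∈ (1,2]. Then S is monotone: for all symmetric 2×2 matrices A, B, (S(A) - S(B)) : (A - B) ≥ 0. -/
/-!
`S(D) = φ(|D|) D` with `φ(t) = (δ + t)^(p-2) ≥ 0`, and `t ↦ φ(t) t = (δ + t)^(p-1) · t / (δ + t)`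
is nondecreasing on `[0, ∞)` as a product of two nonnegative nondecreasing factors. For any
such radial map on an inner product space, Cauchy–Schwarz gives
`(S(A) - S(B)) : (A - B) ≥ (|A| - |B|)(φ(|A|)|A| - φ(|B|)|B|) ≥ 0`. Flattening `2 × 2` arrays
into `ℝ⁴` turns `frob` and `mdot` into the Euclidean norm and inner product.
-/

open scoped RealInnerProductSpace

section RadialMap

variable {E : Type*} [NormedAddCommGroup E] [InnerProductSpace ℝ E]

theorem inner_radial_sub_nonneg {φ : ℝ → ℝ} (hφ : ∀ t, 0 ≤ t → 0 ≤ φ t)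
    (hmono : MonotoneOn (fun t => φ t * t) (Set.Ici 0)) (x y : E) :
    0 ≤ ⟪φ ‖x‖ • x - φ ‖y‖ • y, x - y⟫ := by
  have hexpand : ⟪φ ‖x‖ • x - φ ‖y‖ • y, x - y⟫
      = φ ‖x‖ * ‖x‖ ^ 2 + φ ‖y‖ * ‖y‖ ^ 2 - (φ ‖x‖ + φ ‖y‖) * ⟪x, y⟫ := by
    simp only [inner_sub_left, inner_sub_right, real_inner_smul_left,
      real_inner_self_eq_norm_sq, real_inner_comm x y]
    ring
  have hgap : 0 ≤ (‖x‖ - ‖y‖) * (φ ‖x‖ * ‖x‖ - φ ‖y‖ * ‖y‖) := by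
    rcases le_total ‖y‖ ‖x‖ with h | h
    · exact mul_nonneg (sub_nonneg.2 h)
        (sub_nonneg.2 (hmono (norm_nonneg y) (norm_nonneg x) h))
    · exact mul_nonneg_of_nonpos_of_nonpos (sub_nonpos.2 h)
        (sub_nonpos.2 (hmono (norm_nonneg x) (norm_nonneg y) h))
  have hcs : ⟪x, y⟫ ≤ ‖x‖ * ‖y‖ := real_inner_le_norm x y
  have hsum : 0 ≤ φ ‖x‖ + φ ‖y‖ := add_nonneg (hφ _ (norm_nonneg x)) (hφ _ (norm_nonneg y))
  nlinarith [mul_le_mul_of_nonneg_left hcs hsum]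

end RadialMap

theorem monotoneOn_add_rpow_mul_self {δ p : ℝ} (hδ : 0 < δ) (hp : 1 ≤ p) :
    MonotoneOn (fun t => (δ + t) ^ (p - 2) * t) (Set.Ici 0) := by
  have hfactor : ∀ t ∈ Set.Ici (0 : ℝ),
      (δ + t) ^ (p - 2) * t = (δ + t) ^ (p - 1) * (t / (δ + t)) := by
    intro t (ht : 0 ≤ t)
    have hpos : 0 < δ + t := by linarith
    rw [show p - 1 = p - 2 + 1 by ring, Real.rpow_add_one hpos.ne']
    field_simp
  refine MonotoneOn.congr ?_ (fun t ht => (hfactor t ht).symm)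
  refine MonotoneOn.mul ?_ ?_ ?_ ?_
  · intro a (ha : 0 ≤ a) b _ hab
    exact Real.rpow_le_rpow (by linarith) (by linarith) (by linarith)
  · intro a (ha : 0 ≤ a) b (hb : 0 ≤ b) hab
    dsimp only
    rw [div_le_div_iff₀ (by linarith) (by linarith)]
    nlinarith
  · intro t (ht : 0 ≤ t); positivity
  · intro t (ht : 0 ≤ t); positivity

def flatten : (Fin 2 → Fin 2 → ℝ) ≃ₗ[ℝ] EuclideanSpace ℝ (Fin 2 × Fin 2) :=
  (LinearEquiv.curry ℝ ℝ (Fin 2) (Fin 2)).symm.trans (WithLp.linearEquiv 2 ℝ _).symm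

theorem norm_flatten (A : Fin 2 → Fin 2 → ℝ) : ‖flatten A‖ = frob A := by
  simp [EuclideanSpace.norm_eq, frob, flatten, Fintype.sum_prod_type]

theorem inner_flatten (A B : Fin 2 → Fin 2 → ℝ) : ⟪flatten A, flatten B⟫ = mdot A B := by
  simp [PiLp.inner_apply, mdot, flatten, Fintype.sum_prod_type, mul_comm]

theorem flatten_stressS (δ p : ℝ) (D : Fin 2 → Fin 2 → ℝ) :
    flatten (stressS δ p D) = (δ + ‖flatten D‖) ^ (p - 2) • flatten D := by
  rw [norm_flatten, ← map_smul]
  rfl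

theorem stress_monotone_general (δ p : ℝ) (hδ : 0 < δ) (hp1 : 1 < p)
    (A B : Fin 2 → Fin 2 → ℝ) :
    0 ≤ mdot (stressS δ p A - stressS δ p B) (A - B) := by
  rw [← inner_flatten, map_sub, map_sub, flatten_stressS, flatten_stressS]
  exact inner_radial_sub_nonneg (fun t ht => by positivity)
    (monotoneOn_add_rpow_mul_self hδ hp1.le) _ _

/-- Monotonicity of the stress tensor: for `δ > 0`, `p ∈ (1,2]` and symmetric
2×2 matrices `A, B`, one has `(S(A) - S(B)) : (A - B) ≥ 0`. -/
theorem stress_monotone (δ p : ℝ) (hδ : 0 < δ) (hp1 : 1 < p) (hp2 : p ≤ 2)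
    (A B : Fin 2 → Fin 2 → ℝ) (hA : ∀ i j, A i j = A j i) (hB : ∀ i j, B i j = B j i) :
    0 ≤ mdot (stressS δ p A - stressS δ p B) (A - B) :=
  stress_monotone_general δ p hδ hp1 A B
end
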